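/- For every TUX game w on N, every coalition S ⊆ N, and every embedded coalition (R,ρ) of N\S, the restriction satisfies w_{−S}(R,ρ) = ∑_{τ ∈ Π(N\R) : τ_{−S} = ρ} ( p*_{N\R}(τ) / p*_{(N\S)\R}(ρ) ) · w(R,τ). -/

import Mathlib

open Finset BigOperators

namespace TUX

/-- A (raw) game in partition function form: assigns a real worth to each
coalition together with a partition (of the outside players). -/
abbrev Game := Finset ℕ → Finset (Finset ℕ) → ℝ

/-- A TU game (characteristic function). -/
abbrev TUGame := Finset ℕ → ℝ

/-- A solution for TUX games: given a player set and a game, assigns payoffs. -/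
abbrev Sol := Finset ℕ → Game → ℕ → ℝ

/-- `w` is a genuine TUX game: the empty coalition has worth 0. -/
def IsTUX (w : Game) : Prop := ∀ π, w ∅ π = 0

/-- `π` is a partition of the finite set `M`. -/
def IsPartition (M : Finset ℕ) (π : Finset (Finset ℕ)) : Prop :=
  (∀ B ∈ π, B ⊆ M) ∧ ∅ ∉ π ∧ ∀ x ∈ M, (π.filter (fun B => x ∈ B)).card = 1

instance (M : Finset ℕ) : DecidablePred (IsPartition M) := fun π => by
  unfold IsPartition; infer_instance

/-- The finite set of all partitions of `M`. -/
def partitionsOf (M : Finset ℕ) : Finset (Finset (Finset ℕ)) :=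
  (M.powerset.powerset).filter (IsPartition M)

/-- The Ewens(θ = 1) probability of the partition `π` of `M`:
`p*_M(π) = ∏_{B ∈ π} (|B| - 1)! / |M|!`. -/
noncomputable def pstar (M : Finset ℕ) (π : Finset (Finset ℕ)) : ℝ :=
  (∏ B ∈ π, ((B.card - 1).factorial : ℝ)) / (M.card.factorial : ℝ)

/-- The block of `π` containing `j` (junk if `π` is not a partition containing `j`). -/
def blockOf (π : Finset (Finset ℕ)) (j : ℕ) : Finset ℕ :=
  (π.filter (fun B => j ∈ B)).sup id

/-- Add player `i` to the block `B` of `π`. -/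
def addToBlock (π : Finset (Finset ℕ)) (i : ℕ) (B : Finset ℕ) : Finset (Finset ℕ) :=
  insert (insert i B) (π.erase B)

/-- The restriction operator `r⋆` removing a single player `i` from a game on `N`:
`w₋ᵢ(S,π) = (1/(n-s)) (w(S, π₊ᵢ⇝∅) + ∑_{j ∈ N∖(S∪{i})} w(S, π₊ᵢ⇝π(j)))`. -/
noncomputable def restrict1 (N : Finset ℕ) (w : Game) (i : ℕ) : Game :=
  fun S π =>
    ((N.card : ℝ) - (S.card : ℝ))⁻¹ *
      (w S (insert {i} π) + ∑ j ∈ (N \ S).erase i, w S (addToBlock π i (blockOf π j)))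

/-- Iterated removal of a list of players. -/
noncomputable def restrictL : Finset ℕ → Game → List ℕ → Game
  | _, w, [] => w
  | N, w, i :: l => restrictL (N.erase i) (restrict1 N w i) l

/-- Removal of a set of players (via the increasing enumeration; by path
independence of `r⋆` the order is immaterial). -/
noncomputable def restrictSet (N : Finset ℕ) (w : Game) (T : Finset ℕ) : Game :=
  restrictL N w (T.sort (· ≤ ·))

/-- The average TU game `v̄_w` of a TUX game `w` on `N`. -/
noncomputable def avg (N : Finset ℕ) (w : Game) : TUGame :=
  fun S => ∑ π ∈ partitionsOf (N \ S), pstar (N \ S) π * w S π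

/-- The auxiliary TU game `v*_w(S) = w₋(N∖S)(S,∅)`. -/
noncomputable def auxGame (N : Finset ℕ) (w : Game) : TUGame :=
  fun S => restrictSet N w (N \ S) S ∅

/-- The Shapley value of a TU game on player set `N`. -/
noncomputable def shapley (N : Finset ℕ) (v : TUGame) (i : ℕ) : ℝ :=
  ∑ S ∈ (N.erase i).powerset,
    (((S.card.factorial : ℝ) * ((N.card - S.card - 1).factorial : ℝ)) / (N.card.factorial : ℝ)) *
      (v (insert i S) - v S)

/-- The MPW solution: the Shapley value of the average game. -/
noncomputable def MPW (N : Finset ℕ) (w : Game) (i : ℕ) : ℝ := shapley N (avg N w) i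

/-- The MPW solution as a solution for TUX games. -/
noncomputable def MPWsol : Sol := fun N w i => MPW N w i

/-- The scaled Dirac TUX game `δ_{T,τ}` on `N`. -/
noncomputable def scaledDirac (N T : Finset ℕ) (τ : Finset (Finset ℕ)) : Game :=
  fun S π => if S = T ∧ π = τ then (pstar (N \ T) τ)⁻¹ else 0

/-- `τ₋S`: remove the players of `S` from each block of `τ`, discarding empty blocks. -/
def partRemove (τ : Finset (Finset ℕ)) (S : Finset ℕ) : Finset (Finset ℕ) :=
  (τ.image (fun B => B \ S)).erase ∅

/-- The Sobolev-reduced TUX game `w₋ⱼ^{So,φ}` on `N ∖ {j}`. -/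
noncomputable def sobRed (N : Finset ℕ) (φ : Sol) (w : Game) (j : ℕ) : Game :=
  fun S π =>
    ((S.card : ℝ) / ((N.card : ℝ) - 1)) * (w (insert j S) π - φ N w j) +
      (1 - (S.card : ℝ) / ((N.card : ℝ) - 1)) * restrict1 N w j S π

/-- The Hart–Mas-Colell reduced TUX game `w₋T^{HM,φ}` on `N ∖ T`. -/
noncomputable def hmRed (N : Finset ℕ) (φ : Sol) (w : Game) (T : Finset ℕ) : Game :=
  fun S π => w (S ∪ T) π - ∑ j ∈ T, φ (S ∪ T) (restrictSet N w (N \ (S ∪ T))) j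

/-- Efficiency for TUX games. -/
def EfficientX (φ : Sol) : Prop :=
  ∀ (N : Finset ℕ) (w : Game), IsTUX w → ∑ i ∈ N, φ N w i = w N ∅

/-- Balanced contributions for TUX games (w.r.t. the restriction operator `r⋆`). -/
def BalancedContributionsX (φ : Sol) : Prop :=
  ∀ (N : Finset ℕ) (w : Game), IsTUX w → ∀ i ∈ N, ∀ j ∈ N,
    φ N w i - φ (N.erase j) (restrict1 N w j) i
      = φ N w j - φ (N.erase i) (restrict1 N w i) j

/-- 2-standardness for TUX games. -/
def TwoStandardX (φ : Sol) : Prop :=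
  ∀ i j : ℕ, i ≠ j → ∀ w : Game, IsTUX w →
    φ {i, j} w i
      = w {i} {({j} : Finset ℕ)}
        + (w {i, j} ∅ - w {j} {({i} : Finset ℕ)} - w {i} {({j} : Finset ℕ)}) / 2

/-- Sobolev consistency for TUX games. -/
def SobolevConsistentX (φ : Sol) : Prop :=
  ∀ (N : Finset ℕ) (w : Game), IsTUX w → ∀ i ∈ N, ∀ j ∈ N, i ≠ j →
    φ N w i = φ (N.erase j) (sobRed N φ w j) i

/-- Hart–Mas-Colell consistency (single-player removal) for TUX games. -/
def HMConsistentX (φ : Sol) : Prop :=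
  ∀ (N : Finset ℕ) (w : Game), IsTUX w → ∀ i ∈ N, ∀ j ∈ N, i ≠ j →
    φ N w i = φ (N.erase j) (hmRed N φ w {j}) i

/-- Set Hart–Mas-Colell consistency (removal of a coalition) for TUX games. -/
def SetHMConsistentX (φ : Sol) : Prop :=
  ∀ (N : Finset ℕ) (w : Game), IsTUX w → ∀ i ∈ N, ∀ T ⊆ N.erase i,
    φ N w i = φ (N \ T) (hmRed N φ w T) i

/-- The finite set of embedded coalitions `(T,τ)` of `N` with `T ≠ ∅`. -/
def embeddedNE (N : Finset ℕ) : Finset (Finset ℕ × Finset (Finset ℕ)) :=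
  (N.powerset ×ˢ N.powerset.powerset).filter
    (fun p => p.1.Nonempty ∧ IsPartition (N \ p.1) p.2)

/-!
The partitions `τ` of `N ∖ R` with `τ₋ᵢ = ρ` are `ρ` with `{i}` added as a new block and `ρ`
with `i` put into one of its blocks `B`. Relative to `p*(ρ)` their Ewens weights are `1/(m+1)` and
`|B|/(m+1)`, with `m = |N ∖ (R ∪ {i})|`; since the sum over `j` in `r*` meets each block `B`
exactly `|B|` times, these are the weights `r*` gives them. Removing the players of `S` one at a
time, the fibres compose because `(τ₋S)₋T = τ₋(S ∪ T)`, and the ratios of Ewens weights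
telescope.
-/

variable {M : Finset ℕ} {π ρ σ τ : Finset (Finset ℕ)}

lemma mem_partitionsOf : π ∈ partitionsOf M ↔ IsPartition M π := by
  simp only [partitionsOf, mem_filter, mem_powerset, and_iff_right_iff_imp]
  exact fun h B hB => mem_powerset.mpr (h.1 B hB)

lemma pstar_pos (M : Finset ℕ) (π : Finset (Finset ℕ)) : 0 < pstar M π :=
  div_pos (prod_pos fun _ _ => mod_cast Nat.factorial_pos _) (mod_cast Nat.factorial_pos _)

lemma isPartition_of_forall_eq (hsub : ∀ B ∈ π, B ⊆ M) (hne : ∅ ∉ π)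
    (hcov : ∀ x ∈ M, ∃ B ∈ π, x ∈ B ∧ ∀ B' ∈ π, x ∈ B' → B' = B) :
    IsPartition M π := by
  refine ⟨hsub, hne, fun x hx => ?_⟩
  obtain ⟨B, hB, hxB, huniq⟩ := hcov x hx
  rw [card_eq_one]
  exact ⟨B, by ext C; simp only [mem_filter, mem_singleton]; grind⟩

namespace IsPartition

lemma nonempty_of_mem (h : IsPartition M π) {B : Finset ℕ} (hB : B ∈ π) : B.Nonempty :=
  nonempty_iff_ne_empty.mpr fun h₀ => h.2.1 (h₀ ▸ hB)

lemma notMem_of_notMem (h : IsPartition M π) {B : Finset ℕ} {i : ℕ} (hB : B ∈ π)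
    (hi : i ∉ M) : i ∉ B :=
  fun hiB => hi (h.1 B hB hiB)

lemma eq_of_mem_of_mem (h : IsPartition M π) {B B' : Finset ℕ} {x : ℕ}
    (hB : B ∈ π) (hB' : B' ∈ π) (hx : x ∈ B) (hx' : x ∈ B') : B = B' := by
  obtain ⟨C, hC⟩ := card_eq_one.mp (h.2.2 x (h.1 B hB hx))
  have h₁ : B ∈ π.filter (x ∈ ·) := mem_filter.mpr ⟨hB, hx⟩
  have h₂ : B' ∈ π.filter (x ∈ ·) := mem_filter.mpr ⟨hB', hx'⟩
  rw [hC, mem_singleton] at h₁ h₂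
  rw [h₁, h₂]

lemma disjoint_of_mem_of_ne (h : IsPartition M π) {B B' : Finset ℕ}
    (hB : B ∈ π) (hB' : B' ∈ π) (hne : B ≠ B') : Disjoint B B' :=
  disjoint_left.mpr fun _ hx hx' => hne (h.eq_of_mem_of_mem hB hB' hx hx')

lemma blockOf_mem_and_mem (h : IsPartition M π) {x : ℕ} (hx : x ∈ M) :
    blockOf π x ∈ π ∧ x ∈ blockOf π x := by
  obtain ⟨C, hC⟩ := card_eq_one.mp (h.2.2 x hx)
  have hCmem : C ∈ π.filter (x ∈ ·) := hC ▸ mem_singleton_self C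
  have hblock : blockOf π x = C := by rw [blockOf, hC, sup_singleton, id]
  exact hblock ▸ mem_filter.mp hCmem

lemma blockOf_eq (h : IsPartition M π) {B : Finset ℕ} {x : ℕ} (hB : B ∈ π) (hx : x ∈ B) :
    blockOf π x = B :=
  have hblock := h.blockOf_mem_and_mem (h.1 B hB hx)
  h.eq_of_mem_of_mem hblock.1 hB hblock.2 hx

lemma biUnion_id (h : IsPartition M π) : π.biUnion id = M := by
  ext x
  simp only [mem_biUnion, id]
  exact ⟨fun ⟨B, hB, hx⟩ => h.1 B hB hx, fun hx => ⟨_, h.blockOf_mem_and_mem hx⟩⟩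

lemma sum_blockOf {β : Type*} [AddCommMonoid β] (h : IsPartition M π) (f : Finset ℕ → β) :
    ∑ j ∈ M, f (blockOf π j) = ∑ B ∈ π, B.card • f B := by
  conv_lhs => rw [← h.biUnion_id]
  rw [sum_biUnion (t := id) fun B hB B' hB' hne => h.disjoint_of_mem_of_ne hB hB' hne]
  refine sum_congr rfl fun B hB => ?_
  rw [id_eq, sum_congr rfl fun j hj => congrArg f (h.blockOf_eq hB hj), sum_const]

lemma insert_of_disjoint (h : IsPartition M π) {C : Finset ℕ} (hC : C.Nonempty)
    (hCM : Disjoint C M) : IsPartition (M ∪ C) (insert C π) := by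
  refine isPartition_of_forall_eq ?_ ?_ ?_
  · simp only [mem_insert, forall_eq_or_imp]
    exact ⟨subset_union_right, fun B hB => (h.1 B hB).trans subset_union_left⟩
  · simp only [mem_insert, not_or]
    exact ⟨hC.ne_empty.symm, h.2.1⟩
  · intro x hx
    rcases mem_union.mp hx with hxM | hxC
    · obtain ⟨hB, hxB⟩ := h.blockOf_mem_and_mem hxM
      refine ⟨_, mem_insert_of_mem hB, hxB, fun B' hB' hxB' => ?_⟩
      rcases mem_insert.mp hB' with rfl | hB'
      · exact absurd hxM (disjoint_left.mp hCM hxB')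
      · exact h.eq_of_mem_of_mem hB' hB hxB' hxB
    · refine ⟨C, mem_insert_self C π, hxC, fun B' hB' hxB' => ?_⟩
      rcases mem_insert.mp hB' with rfl | hB'
      · rfl
      · exact absurd (h.1 B' hB' hxB') (disjoint_left.mp hCM hxC)

lemma erase (h : IsPartition M π) {B : Finset ℕ} (hB : B ∈ π) :
    IsPartition (M \ B) (π.erase B) := by
  refine ⟨fun C hC => ?_, fun h₀ => h.2.1 (mem_of_mem_erase h₀), fun x hx => ?_⟩
  · obtain ⟨hCB, hC⟩ := mem_erase.mp hC
    exact subset_sdiff.mpr ⟨h.1 C hC, h.disjoint_of_mem_of_ne hC hB hCB⟩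
  · obtain ⟨hxM, hxB⟩ := mem_sdiff.mp hx
    have hBx : B ∉ π.filter (x ∈ ·) := fun hB' => hxB (mem_filter.mp hB').2
    rw [filter_erase, erase_eq_of_notMem hBx]
    exact h.2.2 x hxM

lemma insert_singleton (h : IsPartition M π) {i : ℕ} (hi : i ∉ M) :
    IsPartition (insert i M) (insert {i} π) := by
  have h' := h.insert_of_disjoint (singleton_nonempty i) (disjoint_singleton_left.mpr hi)
  rwa [union_comm, ← insert_eq] at h'

lemma addToBlock (h : IsPartition M π) {i : ℕ} (hi : i ∉ M) {B : Finset ℕ} (hB : B ∈ π) :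
    IsPartition (insert i M) (TUX.addToBlock π i B) := by
  have hground : M \ B ∪ insert i B = insert i M := by
    ext x; simp only [mem_union, mem_sdiff, mem_insert]; have := @h.1 B hB x; tauto
  have hdisj : Disjoint (insert i B) (M \ B) :=
    disjoint_insert_left.mpr ⟨fun hi' => hi (mem_sdiff.mp hi').1, disjoint_sdiff⟩
  rw [TUX.addToBlock, ← hground]
  exact (h.erase hB).insert_of_disjoint (insert_nonempty i B) hdisj

lemma partRemove (h : IsPartition M τ) (S : Finset ℕ) :
    IsPartition (M \ S) (TUX.partRemove τ S) := by
  refine isPartition_of_forall_eq (fun B hB => ?_) (by simp [TUX.partRemove]) fun x hx => ?_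
  · obtain ⟨C, hC, rfl⟩ := mem_image.mp (mem_of_mem_erase hB)
    exact sdiff_subset_sdiff (h.1 C hC) subset_rfl
  · obtain ⟨hxM, hxS⟩ := mem_sdiff.mp hx
    obtain ⟨hC, hxC⟩ := h.blockOf_mem_and_mem hxM
    have hxCS : x ∈ blockOf τ x \ S := mem_sdiff.mpr ⟨hxC, hxS⟩
    refine ⟨_, mem_erase.mpr ⟨ne_empty_of_mem hxCS, mem_image_of_mem _ hC⟩, hxCS, ?_⟩
    rintro _ hB' hxB'
    obtain ⟨D, hD, rfl⟩ := mem_image.mp (mem_of_mem_erase hB')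
    rw [h.eq_of_mem_of_mem hD hC (mem_sdiff.mp hxB').1 hxC]

end IsPartition

lemma partRemove_eq_self (hσ : ∅ ∉ σ) {S : Finset ℕ} (hS : ∀ B ∈ σ, Disjoint B S) :
    partRemove σ S = σ := by
  rw [partRemove, image_congr fun B hB => (hS B hB).sdiff_eq_left, image_id',
    erase_eq_of_notMem hσ]

lemma partRemove_insert_of_subset {B S : Finset ℕ} (σ : Finset (Finset ℕ)) (hBS : B ⊆ S) :
    partRemove (insert B σ) S = partRemove σ S := by
  rw [partRemove, image_insert, sdiff_eq_empty_iff_subset.mpr hBS, erase_insert_eq_erase,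
    partRemove]

lemma partRemove_insert_of_nonempty {B S : Finset ℕ} (σ : Finset (Finset ℕ))
    (hBS : (B \ S).Nonempty) : partRemove (insert B σ) S = insert (B \ S) (partRemove σ S) := by
  rw [partRemove, image_insert, erase_insert_of_ne hBS.ne_empty, partRemove]

lemma partRemove_partRemove (τ : Finset (Finset ℕ)) (S T : Finset ℕ) :
    partRemove (partRemove τ S) T = partRemove τ (S ∪ T) := by
  have hsdiff : ∀ D : Finset ℕ, (D \ S) \ T = D \ (S ∪ T) := fun _ => sdiff_sdiff_left
  ext B
  simp only [partRemove, mem_erase, mem_image]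
  constructor
  · rintro ⟨hB, C, ⟨-, D, hD, rfl⟩, rfl⟩
    exact ⟨hB, D, hD, (hsdiff D).symm⟩
  · rintro ⟨hB, D, hD, rfl⟩
    refine ⟨hB, D \ S, ⟨fun hDS => hB ?_, D, hD, rfl⟩, hsdiff D⟩
    rw [← hsdiff, hDS, empty_sdiff]

section SinglePlayer

variable {i : ℕ} {B : Finset ℕ}

lemma partRemove_singleton_of_notMem (hρ : IsPartition M ρ) (hi : i ∉ M) :
    partRemove ρ {i} = ρ :=
  partRemove_eq_self hρ.2.1 fun _ hB =>
    disjoint_singleton_right.mpr (hρ.notMem_of_notMem hB hi)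

lemma partRemove_insert_singleton (hρ : IsPartition M ρ) (hi : i ∉ M) :
    partRemove (insert {i} ρ) {i} = ρ := by
  rw [partRemove_insert_of_subset ρ subset_rfl, partRemove_singleton_of_notMem hρ hi]

lemma partRemove_addToBlock (hρ : IsPartition M ρ) (hi : i ∉ M) (hB : B ∈ ρ) :
    partRemove (addToBlock ρ i B) {i} = ρ := by
  have hiB := hρ.notMem_of_notMem hB hi
  have hinsert : insert i B \ {i} = B := by
    rw [sdiff_singleton_eq_erase, erase_insert hiB]
  have hne : (insert i B \ {i}).Nonempty := by
    rw [hinsert]; exact hρ.nonempty_of_mem hB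
  rw [addToBlock, partRemove_insert_of_nonempty _ hne, hinsert,
    partRemove_singleton_of_notMem (hρ.erase hB) fun h => hi (mem_sdiff.mp h).1, insert_erase hB]

lemma eq_insert_singleton_or_addToBlock (hτ : IsPartition M τ) (hi : i ∈ M) :
    τ = insert {i} (partRemove τ {i}) ∨
      ∃ B ∈ partRemove τ {i}, τ = addToBlock (partRemove τ {i}) i B := by
  obtain ⟨hB₀, hiB₀⟩ := hτ.blockOf_mem_and_mem hi
  set B₀ := blockOf τ i
  have hrest : partRemove (τ.erase B₀) {i} = τ.erase B₀ :=
    partRemove_singleton_of_notMem (hτ.erase hB₀) fun h => (mem_sdiff.mp h).2 hiB₀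
  have hτ_eq : τ = insert B₀ (τ.erase B₀) := (insert_erase hB₀).symm
  by_cases hB₀i : (B₀ \ {i}).Nonempty
  · right
    have hρ : partRemove τ {i} = insert (B₀ \ {i}) (τ.erase B₀) := by
      conv_lhs => rw [hτ_eq]
      rw [partRemove_insert_of_nonempty _ hB₀i, hrest]
    have hnotMem : B₀ \ {i} ∉ τ.erase B₀ := fun h => by
      obtain ⟨y, hy⟩ := hB₀i
      have := hτ.eq_of_mem_of_mem (mem_of_mem_erase h) hB₀ hy (mem_sdiff.mp hy).1
      exact (mem_erase.mp (this ▸ h)).1 rfl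
    refine ⟨B₀ \ {i}, hρ ▸ mem_insert_self _ _, ?_⟩
    rw [addToBlock, hρ, erase_insert hnotMem, sdiff_singleton_eq_erase, insert_erase hiB₀]
    exact hτ_eq
  · left
    have hsingle : B₀ = {i} :=
      (subset_singleton_iff.mp (sdiff_eq_empty_iff_subset.mp
        (not_nonempty_iff_eq_empty.mp hB₀i))).resolve_left (ne_empty_of_mem hiB₀)
    have hρ : partRemove τ {i} = τ.erase B₀ := by
      conv_lhs => rw [hτ_eq]
      rw [partRemove_insert_of_subset _ hsingle.le, hrest]
    rw [hρ, ← hsingle]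
    exact hτ_eq

lemma filter_partRemove_singleton_eq (hρ : IsPartition M ρ) (hi : i ∉ M) :
    (partitionsOf (insert i M)).filter (fun τ => partRemove τ {i} = ρ)
      = insert (insert {i} ρ) (ρ.image (addToBlock ρ i)) := by
  ext τ
  simp only [mem_filter, mem_partitionsOf, mem_insert, mem_image]
  constructor
  · rintro ⟨hτ, rfl⟩
    rcases eq_insert_singleton_or_addToBlock hτ (mem_insert_self i M) with h | ⟨B, hB, h⟩
    · exact Or.inl h
    · exact Or.inr ⟨B, hB, h.symm⟩
  · rintro (rfl | ⟨B, hB, rfl⟩)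
    · exact ⟨hρ.insert_singleton hi, partRemove_insert_singleton hρ hi⟩
    · exact ⟨hρ.addToBlock hi hB, partRemove_addToBlock hρ hi hB⟩

lemma blockOf_addToBlock (hρ : IsPartition M ρ) (hi : i ∉ M) (hB : B ∈ ρ) :
    blockOf (addToBlock ρ i B) i = insert i B :=
  (hρ.addToBlock hi hB).blockOf_eq (mem_insert_self _ _) (mem_insert_self i B)

lemma sum_filter_partRemove_singleton {β : Type*} [AddCommMonoid β] (hρ : IsPartition M ρ)
    (hi : i ∉ M) (f : Finset (Finset ℕ) → β) :
    ∑ τ ∈ (partitionsOf (insert i M)).filter (fun τ => partRemove τ {i} = ρ), f τ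
      = f (insert {i} ρ) + ∑ B ∈ ρ, f (addToBlock ρ i B) := by
  have hinj : Set.InjOn (addToBlock ρ i) ρ := fun B hB B' hB' h => by
    have := blockOf_addToBlock hρ hi hB
    rw [h, blockOf_addToBlock hρ hi hB'] at this
    rw [← erase_insert (hρ.notMem_of_notMem hB hi), ← this,
      erase_insert (hρ.notMem_of_notMem hB' hi)]
  have hnotMem : insert {i} ρ ∉ ρ.image (addToBlock ρ i) := by
    simp only [mem_image, not_exists, not_and]
    intro B hB h
    have hblock := (hρ.insert_singleton hi).blockOf_eq (mem_insert_self _ _) (mem_singleton_self i)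
    rw [← h, blockOf_addToBlock hρ hi hB] at hblock
    obtain ⟨y, hy⟩ := hρ.nonempty_of_mem hB
    have hyi : y = i := mem_singleton.mp (hblock ▸ mem_insert_of_mem hy)
    exact hρ.notMem_of_notMem hB hi (hyi ▸ hy)
  rw [filter_partRemove_singleton_eq hρ hi, sum_insert hnotMem, sum_image hinj]

lemma pstar_insert_singleton (hρ : IsPartition M ρ) (hi : i ∉ M) :
    pstar (insert i M) (insert {i} ρ) = pstar M ρ / (M.card + 1) := by
  have hsingle : {i} ∉ ρ := fun h => hρ.notMem_of_notMem h hi (mem_singleton_self i)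
  simp only [pstar, prod_insert hsingle, card_insert_of_notMem hi, card_singleton,
    Nat.sub_self, Nat.factorial_zero, Nat.factorial_succ]
  push_cast
  field_simp

lemma pstar_addToBlock (hρ : IsPartition M ρ) (hi : i ∉ M) (hB : B ∈ ρ) :
    pstar (insert i M) (addToBlock ρ i B) = B.card * pstar M ρ / (M.card + 1) := by
  have hiB := hρ.notMem_of_notMem hB hi
  have hnew : insert i B ∉ ρ.erase B := fun h =>
    hρ.notMem_of_notMem (mem_of_mem_erase h) hi (mem_insert_self i B)
  have hBcard : B.card ≠ 0 := card_ne_zero.mpr (hρ.nonempty_of_mem hB)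
  have hfact : ((B.card.factorial : ℕ) : ℝ) = B.card * (B.card - 1).factorial := by
    rw [← Nat.mul_factorial_pred hBcard, Nat.cast_mul]
  simp only [pstar, addToBlock, prod_insert hnew, ← mul_prod_erase ρ _ hB,
    card_insert_of_notMem hiB, card_insert_of_notMem hi, Nat.add_sub_cancel, hfact,
    Nat.factorial_succ]
  push_cast
  field_simp

end SinglePlayer

lemma restrict1_eq_sum (N : Finset ℕ) (w : Game) {i : ℕ} (hi : i ∈ N) {R : Finset ℕ}
    (hR : R ⊆ N) (hiR : i ∉ R) (hρ : IsPartition ((N.erase i) \ R) ρ) :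
    restrict1 N w i R ρ
      = ∑ τ ∈ (partitionsOf (N \ R)).filter (fun τ => partRemove τ {i} = ρ),
          (pstar (N \ R) τ / pstar ((N.erase i) \ R) ρ) * w R τ := by
  set M := (N.erase i) \ R
  have hiM : i ∉ M := fun h => (mem_erase.mp (mem_sdiff.mp h).1).1 rfl
  have hground : N \ R = insert i M := by
    ext x; simp only [M, mem_sdiff, mem_insert, mem_erase]; grind
  have hcard : (N.card : ℝ) - R.card = M.card + 1 := by
    rw [← Nat.cast_sub (card_le_card hR), ← card_sdiff_of_subset hR, hground,
      card_insert_of_notMem hiM, Nat.cast_succ]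
  have hp : pstar M ρ ≠ 0 := (pstar_pos M ρ).ne'
  rw [restrict1, hcard, hground, erase_insert hiM,
    hρ.sum_blockOf (fun B => w R (addToBlock ρ i B)), sum_filter_partRemove_singleton hρ hiM, pstar_insert_singleton hρ hiM, mul_add, mul_sum]
  congr 1
  · field_simp
  · refine sum_congr rfl fun B hB => ?_
    rw [pstar_addToBlock hρ hiM hB, nsmul_eq_mul]
    field_simp

lemma sum_filter_partRemove_partRemove {β : Type*} [AddCommMonoid β] (M S T : Finset ℕ)
    (ρ : Finset (Finset ℕ)) (f : Finset (Finset ℕ) → β) :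
    ∑ σ ∈ (partitionsOf (M \ S)).filter (fun σ => partRemove σ T = ρ),
        ∑ τ ∈ (partitionsOf M).filter (fun τ => partRemove τ S = σ), f τ
      = ∑ τ ∈ (partitionsOf M).filter (fun τ => partRemove τ (S ∪ T) = ρ), f τ := by
  rw [sum_fiberwise_eq_sum_filter]
  refine sum_congr (filter_congr fun τ hτ => ?_) fun _ _ => rfl
  rw [mem_filter, mem_partitionsOf, partRemove_partRemove]
  exact and_iff_right ((mem_partitionsOf.mp hτ).partRemove S)

lemma restrictL_eq_sum (l : List ℕ) (hl : l.Nodup) (N : Finset ℕ) (hlN : l.toFinset ⊆ N)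
    (w : Game) {R : Finset ℕ} (hR : R ⊆ N \ l.toFinset)
    (hρ : IsPartition ((N \ l.toFinset) \ R) ρ) :
    restrictL N w l R ρ
      = ∑ τ ∈ (partitionsOf (N \ R)).filter (fun τ => partRemove τ l.toFinset = ρ),
          (pstar (N \ R) τ / pstar ((N \ l.toFinset) \ R) ρ) * w R τ := by
  induction l generalizing N w with
  | nil =>
    rw [List.toFinset_nil, sdiff_empty] at hρ
    have hfiber : (partitionsOf (N \ R)).filter
        (fun τ => partRemove τ ([] : List ℕ).toFinset = ρ) = {ρ} := by
      ext τ
      rw [mem_filter, mem_singleton, mem_partitionsOf, List.toFinset_nil]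
      refine ⟨fun ⟨hτ, h⟩ => ?_, fun h => ?_⟩
      · rwa [partRemove_eq_self hτ.2.1 fun _ _ => disjoint_empty_right _] at h
      · subst h; exact ⟨hρ, partRemove_eq_self hρ.2.1 fun _ _ => disjoint_empty_right _⟩
    rw [restrictL, hfiber, sum_singleton, List.toFinset_nil, sdiff_empty,
      div_self (pstar_pos _ _).ne', one_mul]
  | cons i l ih =>
    obtain ⟨hil, hl⟩ := List.nodup_cons.mp hl
    rw [List.toFinset_cons, insert_subset_iff] at hlN
    have hground : N \ (i :: l).toFinset = (N.erase i) \ l.toFinset := by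
      ext x; simp only [List.toFinset_cons, mem_sdiff, mem_insert, mem_erase]; tauto
    have hlN' : l.toFinset ⊆ N.erase i := fun x hx =>
      mem_erase.mpr ⟨fun h => hil (h ▸ List.mem_toFinset.mp hx), hlN.2 hx⟩
    rw [hground] at hR hρ ⊢
    have hRN : R ⊆ N := fun x hx => mem_of_mem_erase (mem_sdiff.mp (hR hx)).1
    have hiR : i ∉ R := fun h => (mem_erase.mp (mem_sdiff.mp (hR h)).1).1 rfl
    have hsd : (N \ R) \ {i} = (N.erase i) \ R := by
      ext x; simp only [mem_sdiff, mem_erase, mem_singleton]; tauto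
    rw [restrictL, ih hl (N.erase i) hlN' _ hR hρ, List.toFinset_cons, insert_eq,
      ← sum_filter_partRemove_partRemove, hsd]
    refine sum_congr rfl fun σ hσ => ?_
    rw [restrict1_eq_sum N w hlN.1 hRN hiR (mem_partitionsOf.mp (mem_filter.mp hσ).1), mul_sum]
    exact sum_congr rfl fun τ _ => by
      rw [← mul_assoc, div_mul_div_cancel₀' (pstar_pos _ _).ne']

end TUX
open TUX in
theorem restrictSet_formula_general (N : Finset ℕ) (w : Game)
    (S : Finset ℕ) (hS : S ⊆ N) :
    ∀ R ⊆ N \ S, ∀ ρ, IsPartition ((N \ S) \ R) ρ →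
      restrictSet N w S R ρ
        = ∑ τ ∈ (partitionsOf (N \ R)).filter (fun τ => partRemove τ S = ρ),
            (pstar (N \ R) τ / pstar ((N \ S) \ R) ρ) * w R τ := by
  intro R hR ρ hρ
  have hsort : (S.sort (· ≤ ·)).toFinset = S := sort_toFinset S _
  rw [restrictSet, restrictL_eq_sum _ (sort_nodup S _) N (by rwa [hsort]) w (R := R) (ρ := ρ)
    (by rwa [hsort]) (by rwa [hsort]), hsort]

open TUX in
/-- Explicit formula for the restriction removing a coalition `S`:
`w₋S(R,ρ) = ∑_{τ ∈ Π(N∖R) : τ₋S = ρ} (p*_{N∖R}(τ)/p*_{(N∖S)∖R}(ρ)) w(R,τ)`. -/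
theorem restrictSet_formula (N : Finset ℕ) (w : Game) (hw : IsTUX w)
    (S : Finset ℕ) (hS : S ⊆ N) :
    ∀ R ⊆ N \ S, ∀ ρ, IsPartition ((N \ S) \ R) ρ →
      restrictSet N w S R ρ
        = ∑ τ ∈ (partitionsOf (N \ R)).filter (fun τ => partRemove τ S = ρ),
            (pstar (N \ R) τ / pstar ((N \ S) \ R) ρ) * w R τ :=
  restrictSet_formula_general N w S hS
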